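/- The sparing number of the Petersen graph is 3. -/

import Mathlib

open Pointwise

/-- The induced set-label on unordered pairs: the sumset of the two vertex labels. -/
def edgeLabel {V : Type*} (f : V → Finset ℕ) : Sym2 V → Finset ℕ :=
  Sym2.lift ⟨fun u v => f u + f v, fun u v => add_comm (f u) (f v)⟩

/-- `f` is a weak integer additive set-indexer of `G`. -/
structure IsWeakIASI {V : Type*} (G : SimpleGraph V) (f : V → Finset ℕ) : Prop where
  nonempty : ∀ v, (f v).Nonempty
  injective : Function.Injective f
  edgeInjective : Set.InjOn (edgeLabel f) G.edgeSet
  weak : ∀ u v, G.Adj u v → (edgeLabel f s(u, v)).card = max (f u).card (f v).card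

/-- The number of mono-indexed edges of `G` under the labeling `f`. -/
noncomputable def monoEdgeCount {V : Type*} (G : SimpleGraph V) (f : V → Finset ℕ) : ℕ :=
  {e ∈ G.edgeSet | (edgeLabel f e).card = 1}.ncard

/-- The sparing number: the minimum number of mono-indexed edges over all weak IASIs. -/
noncomputable def sparingNumber {V : Type*} (G : SimpleGraph V) : ℕ :=
  sInf {n | ∃ f, IsWeakIASI G f ∧ monoEdgeCount G f = n}

/-- The Petersen graph: outer 5-cycle `u₀…u₄`, inner pentagram `v₀…v₄` (`vᵢ ~ vᵢ₊₂`),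
and spokes `uᵢ ~ vᵢ`. -/
def petersenGraph : SimpleGraph (Fin 5 ⊕ Fin 5) :=
  SimpleGraph.fromRel (fun a b =>
    match a, b with
    | Sum.inl i, Sum.inl j => j = i + 1
    | Sum.inr i, Sum.inr j => j = i + 2
    | Sum.inl i, Sum.inr j => i = j
    | _, _ => False)

/-!
By Cauchy–Davenport, `#(A + B) ≥ #A + #B - 1 > max #A #B` when `#A, #B ≥ 2`, so in a weak IASI
the vertices carrying non-singleton labels form an independent set `S`, and an edge is
mono-indexed exactly when it avoids `S`. In a `d`-regular graph exactly `d * #S` edges meet an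
independent set `S`. The Petersen graph is 3-regular with 15 edges and independence number 4, so
at least `15 - 3 * 4 = 3` edges are mono-indexed; a labeling with two-element labels on a maximum
independent set attains this.
-/

open Finset SimpleGraph

instance : DecidableRel petersenGraph.Adj := fun a b => by
  rw [petersenGraph]
  rcases a with i | i <;> rcases b with j | j <;>
    exact decidable_of_iff _ (fromRel_adj _ _ _).symm

lemma edgeLabel_mk {V : Type*} (f : V → Finset ℕ) (u v : V) :
    edgeLabel f s(u, v) = f u + f v := rfl

lemma sparingNumber_eq_of_isLeast {V : Type*} {G : SimpleGraph V} {n : ℕ}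
    (h : IsLeast {n | ∃ f, IsWeakIASI G f ∧ monoEdgeCount G f = n} n) :
    sparingNumber G = n :=
  h.csInf_eq

def multiLabeled {V : Type*} [Fintype V] (f : V → Finset ℕ) : Finset V := {v | #(f v) ≠ 1}

namespace IsWeakIASI

variable {V : Type*} {G : SimpleGraph V} {f : V → Finset ℕ}

lemma card_eq_one_or_card_eq_one_of_adj (hf : IsWeakIASI G f) {u v : V} (huv : G.Adj u v) :
    #(f u) = 1 ∨ #(f v) = 1 := by
  have hsum := cauchy_davenport_add_of_linearOrder_isCancelAdd (hf.nonempty u) (hf.nonempty v)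
  have hweak := hf.weak u v huv
  rw [edgeLabel_mk] at hweak
  have hu := (hf.nonempty u).card_pos
  have hv := (hf.nonempty v).card_pos
  omega

lemma card_edgeLabel_eq_one_iff (hf : IsWeakIASI G f) {u v : V} (huv : G.Adj u v) :
    #(edgeLabel f s(u, v)) = 1 ↔ #(f u) = 1 ∧ #(f v) = 1 := by
  have hu := (hf.nonempty u).card_pos
  have hv := (hf.nonempty v).card_pos
  rw [hf.weak u v huv]
  omega

lemma isIndepSet_multiLabeled [Fintype V] (hf : IsWeakIASI G f) :
    G.IsIndepSet (multiLabeled f : Set V) := fun u hu v hv _ huv => by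
  simp only [multiLabeled, coe_filter, mem_univ, true_and, Set.mem_ofPred_eq] at hu hv
  exact (hf.card_eq_one_or_card_eq_one_of_adj huv).elim hu hv

lemma monoEdgeCount_eq [Fintype V] [DecidableEq V] [DecidableRel G.Adj] (hf : IsWeakIASI G f) :
    monoEdgeCount G f = #{e ∈ G.edgeFinset | ∀ v ∈ e, v ∉ multiLabeled f} := by
  rw [monoEdgeCount, ← Set.ncard_coe_finset]
  congr 1
  ext e
  simp only [coe_filter, mem_edgeFinset, Set.mem_ofPred_eq]
  refine and_congr_right fun he => ?_
  induction e using Sym2.ind with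
  | h u v =>
    simp only [hf.card_edgeLabel_eq_one_iff he, Sym2.mem_iff, multiLabeled, mem_filter, mem_univ,
      true_and, not_not, forall_eq_or_imp, forall_eq]

end IsWeakIASI

namespace SimpleGraph

variable {V : Type*} [Fintype V] [DecidableEq V] {G : SimpleGraph V} [DecidableRel G.Adj]
  {d : ℕ} {S : Finset V}

lemma filter_edgeFinset_exists_mem_eq_biUnion :
    {e ∈ G.edgeFinset | ∃ v ∈ e, v ∈ S} = S.biUnion fun v => G.incidenceFinset v := by
  ext e
  simp only [mem_filter, mem_biUnion, mem_incidenceFinset, incidenceSet, Set.mem_ofPred_eq,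
    mem_edgeFinset]
  tauto

/-- The incidence sets of the vertices of an independent set are pairwise disjoint. -/
lemma IsRegularOfDegree.card_biUnion_incidenceFinset (hreg : G.IsRegularOfDegree d)
    (hS : G.IsIndepSet (S : Set V)) : #(S.biUnion fun v => G.incidenceFinset v) = d * #S := by
  rw [card_biUnion, sum_congr rfl fun v _ => (G.card_incidenceFinset_eq_degree v).trans
    (hreg.degree_eq v), sum_const, smul_eq_mul, mul_comm]
  intro u hu v hv huv
  rw [Function.onFun, ← disjoint_coe, coe_incidenceFinset, coe_incidenceFinset,
    Set.disjoint_iff_inter_eq_empty]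
  exact G.incidenceSet_inter_incidenceSet_of_not_adj (hS hu hv huv) huv

lemma IsRegularOfDegree.card_filter_edgeFinset_add_mul_card (hreg : G.IsRegularOfDegree d)
    (hS : G.IsIndepSet (S : Set V)) :
    #{e ∈ G.edgeFinset | ∀ v ∈ e, v ∉ S} + d * #S = #G.edgeFinset := by
  rw [← hreg.card_biUnion_incidenceFinset hS, ← filter_edgeFinset_exists_mem_eq_biUnion,
    ← card_filter_add_card_filter_not (s := G.edgeFinset) fun e => ∀ v ∈ e, v ∉ S]
  simp only [not_forall, not_not, exists_prop]

end SimpleGraph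

lemma IsWeakIASI.monoEdgeCount_add_mul_card_multiLabeled {V : Type*} [Fintype V]
    [DecidableEq V] {G : SimpleGraph V} [DecidableRel G.Adj] {f : V → Finset ℕ} {d : ℕ}
    (hf : IsWeakIASI G f) (hreg : G.IsRegularOfDegree d) :
    monoEdgeCount G f + d * #(multiLabeled f) = #G.edgeFinset := by
  rw [hf.monoEdgeCount_eq]
  exact hreg.card_filter_edgeFinset_add_mul_card hf.isIndepSet_multiLabeled

lemma petersenGraph_isRegularOfDegree : petersenGraph.IsRegularOfDegree 3 := by
  rw [IsRegularOfDegree]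
  decide

lemma card_edgeFinset_petersenGraph : #petersenGraph.edgeFinset = 15 := by decide

lemma petersenGraph_card_le_two_of_isIndepSet_map_inl (s : Finset (Fin 5))
    (hs : petersenGraph.IsIndepSet (s.map .inl : Finset (Fin 5 ⊕ Fin 5))) : #s ≤ 2 := by
  decide +revert

lemma petersenGraph_card_le_two_of_isIndepSet_map_inr (s : Finset (Fin 5))
    (hs : petersenGraph.IsIndepSet (s.map .inr : Finset (Fin 5 ⊕ Fin 5))) : #s ≤ 2 := by
  decide +revert

/-- An independent set meets each of the two 5-cycles in at most two vertices. -/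
lemma petersenGraph_card_le_four_of_isIndepSet {S : Finset (Fin 5 ⊕ Fin 5)}
    (hS : petersenGraph.IsIndepSet (S : Set (Fin 5 ⊕ Fin 5))) : #S ≤ 4 := by
  have hleft := petersenGraph_card_le_two_of_isIndepSet_map_inl S.toLeft
    (hS.mono (coe_subset.2 (map_inl_subset_iff_subset_toLeft.2 subset_rfl)))
  have hright := petersenGraph_card_le_two_of_isIndepSet_map_inr S.toRight
    (hS.mono (coe_subset.2 (map_inr_subset_iff_subset_toRight.2 subset_rfl)))
  rw [← card_toLeft_add_card_toRight]
  omega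

lemma le_monoEdgeCount_petersenGraph {f : Fin 5 ⊕ Fin 5 → Finset ℕ}
    (hf : IsWeakIASI petersenGraph f) : 3 ≤ monoEdgeCount petersenGraph f := by
  have hcount := hf.monoEdgeCount_add_mul_card_multiLabeled petersenGraph_isRegularOfDegree
  have hindep := petersenGraph_card_le_four_of_isIndepSet hf.isIndepSet_multiLabeled
  rw [card_edgeFinset_petersenGraph] at hcount
  omega

/-- Distinct powers of two `2 ^ k`, which keep all edge sums distinct, thickened to
`{2 ^ k, 2 ^ k + 1}` on the maximum independent set `{u₀, u₂, v₃, v₄}`. -/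
def petersenLabeling : Fin 5 ⊕ Fin 5 → Finset ℕ
  | .inl i => if i = 0 ∨ i = 2 then {2 ^ (i : ℕ), 2 ^ (i : ℕ) + 1} else {2 ^ (i : ℕ)}
  | .inr i =>
    if i = 3 ∨ i = 4 then {2 ^ (i + 5 : ℕ), 2 ^ (i + 5 : ℕ) + 1} else {2 ^ (i + 5 : ℕ)}

lemma isWeakIASI_petersenLabeling : IsWeakIASI petersenGraph petersenLabeling where
  nonempty := by decide
  injective := by decide
  edgeInjective := by
    have hsum : ∀ a b c d, petersenGraph.Adj a b → petersenGraph.Adj c d →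
        petersenLabeling a + petersenLabeling b = petersenLabeling c + petersenLabeling d →
        s(a, b) = s(c, d) := by
      decide
    intro e₁ he₁ e₂ he₂ h
    induction e₁ using Sym2.ind
    induction e₂ using Sym2.ind
    exact hsum _ _ _ _ he₁ he₂ h
  weak := by decide

lemma monoEdgeCount_petersenLabeling : monoEdgeCount petersenGraph petersenLabeling = 3 := by
  have hcount := isWeakIASI_petersenLabeling.monoEdgeCount_add_mul_card_multiLabeled
    petersenGraph_isRegularOfDegree
  have hmulti : #(multiLabeled petersenLabeling) = 4 := by decide
  rw [card_edgeFinset_petersenGraph, hmulti] at hcount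
  omega

/-- The sparing number of the Petersen graph is `3`. -/
theorem sparingNumber_petersen : sparingNumber petersenGraph = 3 :=
  sparingNumber_eq_of_isLeast
    ⟨⟨petersenLabeling, isWeakIASI_petersenLabeling, monoEdgeCount_petersenLabeling⟩,
      fun _ ⟨_, hf, hn⟩ => hn ▸ le_monoEdgeCount_petersenGraph hf⟩
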